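/- arXiv:1505.00861 — 3 statements merged into one kernel-verified Lean document; each statement's English description precedes it below -/
import Mathlib

section
/- Let S_n be conditionally binomial: given R_n = k, S_n is Binomial(k, 1/2) distributed, for a random variable R_n taking values in {0,1,...,n+1}. Then P(S_n ≤ R_n/4) ≤ E[exp(-R_n/16)]. -/
open MeasureTheory Finset
open scoped ENNReal

/-! Conditioning on `R = k`, the event `S ≤ R / 4` has probability at most the lower tail
`P(B ≤ k / 4)` of `B ~ B(k, 1/2)`. The Chernoff bound with weight `2^{-B}` gives
`P(B ≤ k / 4) ≤ 2^{k/4} E[2^{-B}] = (3 · 2^{1/4} / 4)^k ≤ exp(-k/16)`; summing over `k`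
against the law of `R` gives the expectation. -/

theorem measure_le_lintegral_of_measure_inter_preimage_singleton_le
    {Ω α : Type*} [MeasurableSpace Ω] [MeasurableSpace α] [Countable α]
    [MeasurableSingletonClass α] {μ : Measure Ω} {X : Ω → α} (hX : Measurable X)
    {A : Set Ω} {g : α → ℝ≥0∞} (h : ∀ a, μ (A ∩ X ⁻¹' {a}) ≤ g a * μ (X ⁻¹' {a})) :
    μ A ≤ ∫⁻ ω, g (X ω) ∂μ := by
  calc μ A = μ (⋃ a, A ∩ X ⁻¹' {a}) := by
        rw [← Set.inter_iUnion, ← Set.preimage_iUnion, Set.iUnion_of_singleton,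
          Set.preimage_univ, Set.inter_univ]
    _ ≤ ∑' a, μ (A ∩ X ⁻¹' {a}) := measure_iUnion_le _
    _ ≤ ∑' a, g a * μ (X ⁻¹' {a}) := ENNReal.tsum_le_tsum h
    _ = ∫⁻ ω, g (X ω) ∂μ := by
        rw [← lintegral_map (measurable_of_countable g) hX, lintegral_countable']
        simp only [Measure.map_apply hX (measurableSet_singleton _)]

theorem sum_range_choose_mul_inv_two_pow_le_exp (k : ℕ) :
    ∑ l ∈ range (k / 4 + 1), (k.choose l : ℝ) * 2⁻¹ ^ k ≤ Real.exp (-k / 16) := by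
  set c : ℝ := 2 ^ (4⁻¹ : ℝ)
  have hc4 : c ^ 4 = 2 := by simpa using Real.rpow_inv_natCast_pow (x := 2) zero_le_two four_ne_zero
  have hc1 : 1 ≤ c := Real.one_le_rpow one_le_two (by norm_num)
  have hc : 3 / 4 * c ≤ Real.exp (-1 / 16) := by
    refine le_of_pow_le_pow_left₀ four_ne_zero (Real.exp_pos _).le ?_
    calc (3 / 4 * c) ^ 4 = 81 / 128 := by rw [mul_pow, hc4]; norm_num
      _ ≤ -1 / 4 + 1 := by norm_num
      _ ≤ Real.exp (-1 / 4) := Real.add_one_le_exp _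
      _ = Real.exp (-1 / 16) ^ 4 := by rw [← Real.exp_nat_mul]; norm_num
  have hbin : ∑ l ∈ range (k + 1), (k.choose l : ℝ) * 2⁻¹ ^ l = (3 / 2) ^ k := by
    rw [show (3 / 2 : ℝ) = 2⁻¹ + 1 by norm_num, add_pow]
    exact sum_congr rfl fun _ _ => by ring
  calc ∑ l ∈ range (k / 4 + 1), (k.choose l : ℝ) * 2⁻¹ ^ k
      ≤ ∑ l ∈ range (k + 1), (k.choose l : ℝ) * 2⁻¹ ^ k * (c ^ k * 2⁻¹ ^ l) := by
        refine (sum_le_sum fun l hl => ?_).trans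
          (sum_le_sum_of_subset_of_nonneg (range_subset_range.mpr (by omega))
            fun _ _ _ => by positivity)
        have h2l : (2 : ℝ) ^ l ≤ c ^ k := by
          rw [← hc4, ← pow_mul]
          exact pow_le_pow_right₀ hc1 (by rw [mem_range] at hl; omega)
        refine le_mul_of_one_le_right (by positivity) ?_
        rw [inv_pow, ← div_eq_mul_inv, one_le_div (by positivity)]
        exact h2l
    _ = (2⁻¹ * c) ^ k * ∑ l ∈ range (k + 1), (k.choose l : ℝ) * 2⁻¹ ^ l := by
        rw [mul_sum]
        exact sum_congr rfl fun _ _ => by ring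
    _ = (3 / 4 * c) ^ k := by rw [hbin, ← mul_pow]; ring_nf
    _ ≤ Real.exp (-1 / 16) ^ k := pow_le_pow_left₀ (by positivity) hc k
    _ = Real.exp (-k / 16) := by rw [← Real.exp_nat_mul]; ring_nf

theorem stmt_5_general {Ω : Type*} [MeasurableSpace Ω] (μ : Measure Ω)
    (R S : Ω → ℕ) (hmR : Measurable R)
    (hcond : ∀ k l : ℕ, l ≤ k →
      μ {ω | S ω = l ∧ R ω = k}
        = (Nat.choose k l : ℝ≥0∞) * (2 : ℝ≥0∞)⁻¹ ^ k * μ {ω | R ω = k}) :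
    μ {ω | (S ω : ℝ) ≤ (R ω : ℝ) / 4}
      ≤ ∫⁻ ω, ENNReal.ofReal (Real.exp (-(R ω : ℝ) / 16)) ∂μ := by
  refine measure_le_lintegral_of_measure_inter_preimage_singleton_le hmR
    (g := fun k : ℕ => ENNReal.ofReal (Real.exp (-k / 16))) fun k => ?_
  have hsub : {ω | (S ω : ℝ) ≤ R ω / 4} ∩ R ⁻¹' {k}
      ⊆ ⋃ l ∈ range (k / 4 + 1), {ω | S ω = l ∧ R ω = k} := by
    rintro ω ⟨hS : (S ω : ℝ) ≤ R ω / 4, hR : R ω = k⟩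
    have : 4 * S ω ≤ k := by rw [hR] at hS; exact_mod_cast (by linarith : (4 * S ω : ℝ) ≤ k)
    simp only [Set.mem_iUnion, mem_range]
    exact ⟨S ω, by omega, rfl, hR⟩
  have htail : ∑ l ∈ range (k / 4 + 1), (k.choose l : ℝ≥0∞) * 2⁻¹ ^ k
      ≤ ENNReal.ofReal (Real.exp (-k / 16)) := by
    rw [ENNReal.le_ofReal_iff_toReal_le (by simp [ENNReal.mul_eq_top]) (Real.exp_pos _).le,
      ENNReal.toReal_sum fun _ _ => by finiteness]
    simpa using sum_range_choose_mul_inv_two_pow_le_exp k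
  calc μ ({ω | (S ω : ℝ) ≤ R ω / 4} ∩ R ⁻¹' {k})
      ≤ ∑ l ∈ range (k / 4 + 1), μ {ω | S ω = l ∧ R ω = k} :=
        (measure_mono hsub).trans (measure_biUnion_finset_le _ _)
    _ = (∑ l ∈ range (k / 4 + 1), (k.choose l : ℝ≥0∞) * 2⁻¹ ^ k) * μ (R ⁻¹' {k}) := by
        rw [sum_mul]
        exact sum_congr rfl fun l hl => hcond k l (by rw [mem_range] at hl; omega)
    _ ≤ ENNReal.ofReal (Real.exp (-k / 16)) * μ (R ⁻¹' {k}) := by gcongr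

/-- If, conditionally on `R_n = k`, the random variable `S_n` is
binomial `B(k, 1/2)`, then `P(S_n ≤ R_n/4) ≤ E[exp(-R_n/16)]`. -/
theorem stmt_5 {Ω : Type*} [MeasurableSpace Ω] (μ : Measure Ω) [IsProbabilityMeasure μ]
    (n : ℕ) (R S : Ω → ℕ) (hmR : Measurable R) (hmS : Measurable S)
    (hRle : ∀ ω, R ω ≤ n + 1)
    (hcond : ∀ k l : ℕ, l ≤ k →
      μ {ω | S ω = l ∧ R ω = k}
        = (Nat.choose k l : ℝ≥0∞) * (2 : ℝ≥0∞)⁻¹ ^ k * μ {ω | R ω = k}) :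
    μ {ω | (S ω : ℝ) ≤ (R ω : ℝ) / 4}
      ≤ ∫⁻ ω, ENNReal.ofReal (Real.exp (-(R ω : ℝ) / 16)) ∂μ :=
  stmt_5_general μ R S hmR hcond
end

section
/- Let {X_n} be a random walk on a weighted graph (G, μ) whose reversible measure m satisfies c_1 r^{d_f} ≤ m(B(x,r)) ≤ c_2 r^{d_f} for all x and integers r ≥ 0, and whose heat kernel satisfies the sub-Gaussian lower bound p_n(x,y)/m(y) + p_{n+1}(x,y)/m(y) ≥ c_3 V(x, n^{1/d_w})^{-1} exp(-c_4 (d(x,y)^{d_w}/n)^{1/(d_w-1)}) for all x,y with d(x,y) ≤ n, where d_w > 1. Then there exists ε ∈ (0,1) such that P_y(d(x, X_n) > r) ≤ 1 - ε for all r ≥ 1, all n ≥ 4^{d_w/(d_w-1)} with n < r^{d_w}, and all x, y with d(x,y) ≤ r. -/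
open MeasureTheory
open scoped ENNReal

/-- On a geodesic walk, vertices along the walk are close to both endpoints. -/
private lemma dist_getVert_aux {V : Type*} {G : SimpleGraph V} (hG : G.Connected)
    {u v : V} (p : G.Walk u v) (t : ℕ) :
    G.dist u (p.getVert t) ≤ t ∧ G.dist (p.getVert t) v ≤ p.length - t := by
  induction p generalizing t with
  | nil =>
      simp [SimpleGraph.Walk.getVert, SimpleGraph.dist_self]
  | @cons u u' v h q ih =>
      cases t with
      | zero =>
          constructor
          · simp
          · simpa using SimpleGraph.dist_le (SimpleGraph.Walk.cons h q)
      | succ t =>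
          rw [SimpleGraph.Walk.getVert_cons_succ]
          obtain ⟨ih1, ih2⟩ := ih t
          constructor
          · have htri := hG.dist_triangle (u := u) (v := u') (w := q.getVert t)
            have huu' : G.dist u u' ≤ 1 := by
              simpa using SimpleGraph.dist_le (SimpleGraph.Walk.cons h SimpleGraph.Walk.nil)
            omega
          · simpa [SimpleGraph.Walk.length_cons] using ih2.trans (by omega)

/-- Countable additivity of a measure over the fibers `{ω | ω k = z}` for `z` in
a set `S` of a countable space. -/
private lemma tsum_fiber_measure {V : Type*} [Countable V] [MeasurableSpace V]
    [MeasurableSingletonClass V] (ν : Measure (ℕ → V)) (k : ℕ) (S : Set V) :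
    ∑' z : S, ν {ω | ω k = z.val} = ν {ω | ω k ∈ S} := by
  have hset : {ω : ℕ → V | ω k ∈ S} = ⋃ z : S, {ω : ℕ → V | ω k = z.val} := by
    ext ω; simp
  rw [hset, measure_iUnion]
  · intro i j hij
    refine Set.disjoint_left.mpr ?_
    intro ω h1 h2
    exact hij (Subtype.ext (h1.symm.trans h2))
  · intro z
    have hz : {ω : ℕ → V | ω k = z.val} = (fun ω : ℕ → V => ω k) ⁻¹' {z.val} := by
      ext ω; simp
    rw [hz]
    exact (measurable_pi_apply k) (measurableSet_singleton z.val)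

/-- For a nearest-neighbour random walk on a connected graph whose
reversible measure is `d_f`-regular (`c₁ r^{d_f} ≤ m(B(x,r)) ≤ c₂ r^{d_f}`, with `0^{d_f}`
read as `1`) and whose heat kernel satisfies the sub-Gaussian lower bound
`p_n(x,y)/m(y) + p_{n+1}(x,y)/m(y) ≥ c₃ V(x,n^{1/d_w})⁻¹ exp(-c₄ (d(x,y)^{d_w}/n)^{1/(d_w-1)})`
for `d(x,y) ≤ n`, there exists `ε ∈ (0,1)` such that `P_y(d(x,X_n) > r) ≤ 1-ε` whenever
`r ≥ 1`, `4^{d_w/(d_w-1)} ≤ n < r^{d_w}` and `d(x,y) ≤ r`. -/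
theorem stmt_16 {V : Type*} [Countable V] [MeasurableSpace V] [MeasurableSingletonClass V]
    (G : SimpleGraph V) (hG : G.Connected)
    (μ : V → Measure (ℕ → V)) (hprob : ∀ x, IsProbabilityMeasure (μ x))
    (hstart : ∀ x, ∀ᵐ ω ∂(μ x), ω 0 = x)
    (hadj : ∀ x, ∀ᵐ ω ∂(μ x), ∀ k : ℕ, G.Adj (ω k) (ω (k + 1)))
    (m : V → ℝ≥0∞) (c₁ c₂ c₃ c₄ df dw : ℝ)
    (hc₁ : 0 < c₁) (hc₂ : 0 < c₂) (hc₃ : 0 < c₃) (hc₄ : 0 < c₄)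
    (hdf : 0 < df) (hdw : 1 < dw)
    (hvol_lower : ∀ x, ∀ r : ℕ,
      ENNReal.ofReal (c₁ * ((max r 1 : ℕ) : ℝ) ^ df)
        ≤ ∑' y : {y | G.dist x y ≤ r}, m y.val)
    (hvol_upper : ∀ x, ∀ r : ℕ,
      (∑' y : {y | G.dist x y ≤ r}, m y.val)
        ≤ ENNReal.ofReal (c₂ * ((max r 1 : ℕ) : ℝ) ^ df))
    (hkernel : ∀ x y, ∀ n : ℕ, 1 ≤ n → G.dist x y ≤ n →
      ENNReal.ofReal
          (c₃ * Real.exp (-c₄ * (((G.dist x y : ℝ) ^ dw / n) ^ (1 / (dw - 1))))) * m y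
          / (∑' z : {z | (G.dist x z : ℝ) ≤ (n : ℝ) ^ (1 / dw)}, m z.val)
        ≤ μ x {ω | ω n = y} + μ x {ω | ω (n + 1) = y}) :
    ∃ ε : ℝ, 0 < ε ∧ ε < 1 ∧ ∀ r : ℕ, 1 ≤ r → ∀ n : ℕ,
      (4 : ℝ) ^ (dw / (dw - 1)) ≤ (n : ℝ) → (n : ℝ) < (r : ℝ) ^ dw →
      ∀ x y, G.dist x y ≤ r →
        μ y {ω | (r : ℝ) < (G.dist x (ω n) : ℝ)} ≤ ENNReal.ofReal (1 - ε) := by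
  have hdw0 : (0:ℝ) < dw := lt_trans one_pos hdw
  have hdw1 : (0:ℝ) < dw - 1 := by linarith
  set K : ℝ := (4:ℝ) ^ (dw / (dw - 1)) with hKdef
  have hKpos : 0 < K := Real.rpow_pos_of_pos (by norm_num) _
  set E : ℝ := c₃ * Real.exp (-c₄ * K) with hEdef
  have hEpos : 0 < E := mul_pos hc₃ (Real.exp_pos _)
  set δ : ℝ := c₁ * E / c₂ with hδdef
  have hδpos : 0 < δ := div_pos (mul_pos hc₁ hEpos) hc₂
  refine ⟨min (1/2) (δ/2), lt_min (by norm_num) (by linarith),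
    lt_of_le_of_lt (min_le_left _ _) (by norm_num), ?_⟩
  intro r hr n hn4 hnr x y hxy
  set ε : ℝ := min (1/2) (δ/2) with hεdef
  have hεpos : 0 < ε := lt_min (by norm_num) (by linarith)
  have hε12 : ε ≤ 1/2 := min_le_left _ _
  -- basic numeric facts
  have hKe : (1:ℝ) ≤ dw / (dw - 1) := by
    rw [le_div_iff₀ hdw1]; linarith
  have h4K : (4:ℝ) ≤ K := by
    calc (4:ℝ) = 4 ^ (1:ℝ) := (Real.rpow_one 4).symm
    _ ≤ 4 ^ (dw / (dw - 1)) := Real.rpow_le_rpow_of_exponent_le (by norm_num) hKe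
  have hn4' : (4:ℝ) ≤ (n:ℝ) := le_trans h4K hn4
  have hnpos : (0:ℝ) < (n:ℝ) := by linarith
  have hn1 : 1 ≤ n := by exact_mod_cast (by linarith : (1:ℝ) ≤ (n:ℝ))
  set nroot : ℝ := (n:ℝ) ^ (1/dw) with hnrootdef
  have hnroot1 : (1:ℝ) ≤ nroot := Real.one_le_rpow (by linarith) (one_div_nonneg.mpr hdw0.le)
  set s : ℕ := ⌊nroot⌋₊ with hsdef
  have hs1 : 1 ≤ s := Nat.le_floor (by exact_mod_cast hnroot1)
  have hsle : (s:ℝ) ≤ nroot := Nat.floor_le (by positivity)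
  -- `4 * nroot ≤ n`
  have h4n : 4 * nroot ≤ (n:ℝ) := by
    have hexpid : dw / (dw - 1) * ((dw - 1) / dw) = 1 := by
      field_simp
    have h4eq : (4:ℝ) = ((4:ℝ) ^ (dw / (dw - 1))) ^ ((dw - 1) / dw) := by
      rw [← Real.rpow_mul (by norm_num), hexpid, Real.rpow_one]
    have h4le : (4:ℝ) ≤ (n:ℝ) ^ ((dw - 1) / dw) := by
      calc (4:ℝ) = ((4:ℝ) ^ (dw / (dw - 1))) ^ ((dw - 1) / dw) := h4eq
      _ ≤ (n:ℝ) ^ ((dw - 1) / dw) :=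
          Real.rpow_le_rpow (le_of_lt (Real.rpow_pos_of_pos (by norm_num) _)) hn4
            (div_nonneg hdw1.le hdw0.le)
    have hsum : (dw - 1) / dw + 1 / dw = 1 := by field_simp; ring
    calc 4 * nroot ≤ (n:ℝ) ^ ((dw - 1) / dw) * nroot := by
          apply mul_le_mul_of_nonneg_right h4le (by positivity)
    _ = (n:ℝ) ^ ((dw - 1) / dw + 1 / dw) := (Real.rpow_add hnpos _ _).symm
    _ = (n:ℝ) := by rw [hsum, Real.rpow_one]
  -- `s < r`
  have hrpos : (0:ℝ) < (r:ℝ) := by exact_mod_cast hr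
  have hnrootr : nroot < (r:ℝ) := by
    have hid : ((r:ℝ) ^ dw) ^ (1/dw) = (r:ℝ) := by
      rw [← Real.rpow_mul (le_of_lt hrpos), mul_one_div, div_self (ne_of_gt hdw0),
        Real.rpow_one]
    calc nroot < ((r:ℝ) ^ dw) ^ (1/dw) :=
          Real.rpow_lt_rpow (by positivity) hnr (one_div_pos.mpr hdw0)
    _ = (r:ℝ) := hid
  have hsr : s < r := by exact_mod_cast lt_of_le_of_lt hsle hnrootr
  -- choose the intermediate vertex `b` on a geodesic from `y` to `x`
  have hxy' : G.dist y x ≤ r := by rwa [SimpleGraph.dist_comm] at hxy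
  obtain ⟨p, hp⟩ := hG.exists_walk_length_eq_dist y x
  obtain ⟨b, hyb, hbx⟩ : ∃ b : V, G.dist y b ≤ min (s + 1) (G.dist y x) ∧
      G.dist b x ≤ G.dist y x - min (s + 1) (G.dist y x) :=
    ⟨p.getVert _, (dist_getVert_aux hG p _).1, by
      simpa [hp] using (dist_getVert_aux hG p _).2⟩
  have hbxr : G.dist b x + (s + 1) ≤ r := by
    rcases le_or_gt (s + 1) (G.dist y x) with h | h
    · rw [min_eq_left h] at hyb hbx
      omega
    · rw [min_eq_right h.le] at hyb hbx
      omega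
  have hybs : G.dist y b ≤ s + 1 := le_trans hyb (min_le_left _ _)
  set S : Set V := {z : V | G.dist b z ≤ s} with hSdef
  have hSx : ∀ z ∈ S, G.dist x z + 1 ≤ r := by
    intro z hz
    have htri := hG.dist_triangle (u := x) (v := b) (w := z)
    have hcomm : G.dist x b = G.dist b x := SimpleGraph.dist_comm ..
    have hz' : G.dist b z ≤ s := hz
    omega
  have hSy : ∀ z ∈ S, G.dist y z ≤ 2 * s + 1 := by
    intro z hz
    have htri := hG.dist_triangle (u := y) (v := b) (w := z)
    have hz' : G.dist b z ≤ s := hz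
    omega
  have hSn : 2 * s + 1 ≤ n := by
    have h : ((2 * s + 1 : ℕ):ℝ) ≤ (n:ℝ) := by
      push_cast
      linarith [hsle, hnroot1, h4n]
    exact_mod_cast h
  -- the exponent bound on `S`
  have hexp : ∀ z ∈ S, ((G.dist y z : ℝ) ^ dw / n) ^ (1 / (dw - 1)) ≤ K := by
    intro z hz
    have hd0 : (0:ℝ) ≤ (G.dist y z : ℝ) := Nat.cast_nonneg _
    have hd4 : (G.dist y z : ℝ) ≤ 4 * nroot := by
      have h1 : (G.dist y z : ℝ) ≤ 2 * (s:ℝ) + 1 := by exact_mod_cast hSy z hz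
      linarith [hsle, hnroot1]
    have hpow : (G.dist y z : ℝ) ^ dw ≤ (4:ℝ) ^ dw * (n:ℝ) := by
      have h2 : (G.dist y z : ℝ) ^ dw ≤ (4 * nroot) ^ dw :=
        Real.rpow_le_rpow hd0 hd4 (le_of_lt hdw0)
      have h3 : (4 * nroot) ^ dw = (4:ℝ) ^ dw * (n:ℝ) := by
        rw [Real.mul_rpow (by norm_num) (by positivity), hnrootdef,
          ← Real.rpow_mul (le_of_lt hnpos), one_div, inv_mul_cancel₀ (ne_of_gt hdw0),
          Real.rpow_one]
      rw [h3] at h2; exact h2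
    have hratio : (G.dist y z : ℝ) ^ dw / (n:ℝ) ≤ (4:ℝ) ^ dw := by
      rw [div_le_iff₀ hnpos]; linarith
    calc ((G.dist y z : ℝ) ^ dw / (n:ℝ)) ^ (1 / (dw - 1))
        ≤ ((4:ℝ) ^ dw) ^ (1 / (dw - 1)) :=
          Real.rpow_le_rpow (by positivity) hratio (one_div_nonneg.mpr hdw1.le)
    _ = K := by
          rw [hKdef, ← Real.rpow_mul (by norm_num), mul_one_div]
  -- the heat-kernel sum over the ball `S`
  set T : ℝ≥0∞ := ∑' z : {z | (G.dist y z : ℝ) ≤ (n:ℝ) ^ (1/dw)}, m z.val with hTdef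
  have hTset : {z : V | (G.dist y z : ℝ) ≤ (n:ℝ) ^ (1/dw)} = {z : V | G.dist y z ≤ s} := by
    ext z
    simp only [Set.mem_setOf_eq, hsdef]
    exact (Nat.le_floor_iff (by positivity)).symm
  have hTle : T ≤ ENNReal.ofReal (c₂ * ((max s 1 : ℕ):ℝ) ^ df) := by
    rw [hTdef, hTset]
    exact hvol_upper y s
  have hker_ge : ∀ z : S,
      ENNReal.ofReal E * m z.val / T
        ≤ μ y {ω | ω n = z.val} + μ y {ω | ω (n+1) = z.val} := by
    intro z
    have hdn : G.dist y z.val ≤ n := le_trans (hSy z.val z.property) hSn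
    refine le_trans ?_ (hkernel y z.val n hn1 hdn)
    apply ENNReal.div_le_div _ le_rfl
    apply mul_le_mul_left
    apply ENNReal.ofReal_le_ofReal
    apply mul_le_mul_of_nonneg_left _ (le_of_lt hc₃)
    apply Real.exp_le_exp.mpr
    have := hexp z.val z.property
    nlinarith [hc₄]
  -- put everything together
  set A : Set (ℕ → V) := {ω : ℕ → V | G.dist x (ω n) ≤ r} with hAdef
  have hmaxs : (max s 1 : ℕ) = s := max_eq_left hs1
  have hkey : ENNReal.ofReal δ ≤ μ y A + μ y A := by
    have hsrdf : (0:ℝ) < ((max s 1 : ℕ):ℝ) ^ df := by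
      apply Real.rpow_pos_of_pos
      rw [hmaxs]
      exact_mod_cast hs1
    calc ENNReal.ofReal δ
        = ENNReal.ofReal E * ENNReal.ofReal (c₁ * ((max s 1 : ℕ):ℝ) ^ df)
            / ENNReal.ofReal (c₂ * ((max s 1 : ℕ):ℝ) ^ df) := by
          rw [← ENNReal.ofReal_mul (le_of_lt hEpos),
            ← ENNReal.ofReal_div_of_pos (by positivity)]
          congr 1
          rw [hδdef]
          field_simp
    _ ≤ ENNReal.ofReal E * (∑' z : S, m z.val) / T :=
          ENNReal.div_le_div (mul_le_mul_right (hvol_lower b s) _) hTle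
    _ = ∑' z : S, ENNReal.ofReal E * m z.val / T := by
          simp only [div_eq_mul_inv]
          rw [ENNReal.tsum_mul_right, ENNReal.tsum_mul_left]
    _ ≤ ∑' z : S, (μ y {ω | ω n = z.val} + μ y {ω | ω (n+1) = z.val}) :=
          ENNReal.tsum_le_tsum hker_ge
    _ = μ y {ω | ω n ∈ S} + μ y {ω | ω (n+1) ∈ S} := by
          rw [ENNReal.tsum_add, tsum_fiber_measure, tsum_fiber_measure]
    _ ≤ μ y A + μ y A := by
          apply add_le_add
          · apply measure_mono
            intro ω hω
            have h1 := hSx (ω n) hω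
            simp only [hAdef, Set.mem_setOf_eq]
            omega
          · apply measure_mono_ae
            filter_upwards [hadj y] with ω hω hmem
            have hadj' : G.Adj (ω n) (ω (n+1)) := hω n
            have h1 : G.dist (ω n) (ω (n+1)) ≤ 1 := by
              simpa using SimpleGraph.dist_le
                (SimpleGraph.Walk.cons hadj' SimpleGraph.Walk.nil)
            have htri := hG.dist_triangle (u := x) (v := ω (n+1)) (w := ω n)
            have hcm : G.dist (ω (n+1)) (ω n) = G.dist (ω n) (ω (n+1)) :=
              SimpleGraph.dist_comm ..
            have h2 := hSx (ω (n+1)) hmem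
            show G.dist x (ω n) ≤ r
            omega
  -- conclude
  have hAmeas : MeasurableSet A := by
    have : A = (fun ω : ℕ → V => ω n) ⁻¹' {v | G.dist x v ≤ r} := rfl
    rw [this]
    exact (measurable_pi_apply n) (Set.to_countable _).measurableSet
  have hμA : ENNReal.ofReal ε ≤ μ y A := by
    have h2A : ENNReal.ofReal δ ≤ 2 * μ y A := by
      rwa [two_mul]
    have hδ2 : ENNReal.ofReal (δ/2) ≤ μ y A := by
      rw [ENNReal.ofReal_div_of_pos (by norm_num)]
      rw [ENNReal.div_le_iff_le_mul (Or.inl (by norm_num)) (Or.inl (by norm_num))]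
      calc ENNReal.ofReal δ ≤ 2 * μ y A := h2A
      _ = μ y A * ENNReal.ofReal 2 := by
            rw [mul_comm]; congr 1; rw [ENNReal.ofReal_ofNat]
    exact le_trans (ENNReal.ofReal_le_ofReal (min_le_right _ _)) hδ2
  have hcompl : {ω : ℕ → V | (r:ℝ) < (G.dist x (ω n) : ℝ)} = Aᶜ := by
    ext ω
    simp [hAdef, Nat.cast_lt, not_le]
  haveI := hprob y
  rw [hcompl, prob_compl_eq_one_sub hAmeas]
  have : ENNReal.ofReal (1 - ε) = 1 - ENNReal.ofReal ε := by
    rw [ENNReal.ofReal_sub _ (le_of_lt hεpos), ENNReal.ofReal_one]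
  rw [this]
  exact tsub_le_tsub_left hμA 1
end

section
/- Suppose a Markov chain {X_n} satisfies: there exist ε ∈ (0,1), η ≥ 1 and d_w > 1 such that for all x, y with d(x,y) ≤ 2r and all k ≥ 0, ℓ with k⌊r^{d_w}⌋ ≤ ℓ ≤ (k+1)⌊r^{d_w}⌋ and ℓ ≥ 4^{d_w/(d_w-1)}, P_y(max_{0≤j≤ℓ} d(x, X_j) ≤ 3ηr, d(x, X_ℓ) ≤ 2r) ≥ (ε/2)^k ∧ (ε/2). Then there exist N_0 ≥ 1 and constants C_1, C_2 > 0 such that P_x(max_{0≤j≤n} d(x, X_j) ≤ r) ≥ C_1 exp(-C_2 n / r^{d_w}) for all r ≥ N_0 and n ≥ 4^{d_w/(d_w-1)}. -/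
/-!
Cut the time interval `[0, n]` into `k = n / ⌊r'^{d_w}⌋` blocks of length `⌊r'^{d_w}⌋`,
where `r' = ⌊r / (3η)⌋`. Starting the hypothesis at `y = x` with radius `r'` confines the
path to the ball of radius `3ηr' ≤ r` with probability at least `(ε/2)^k ∧ (ε/2)`, and
`r' ≥ r / (6η)` gives `k ≲ (6η)^{d_w} n / r^{d_w}`, which turns `(ε/2)^k` into the
exponential lower bound.
-/

open MeasureTheory
open scoped ENNReal

section Floor

variable {K : Type*} [Field K] [LinearOrder K] [IsStrictOrderedRing K] [FloorSemiring K]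

theorem half_le_natFloor {a : K} (ha : 1 ≤ a) : a / 2 ≤ ⌊a⌋₊ := by
  have hfloor : (1 : K) ≤ ⌊a⌋₊ := Nat.one_le_cast.mpr (Nat.le_floor (by simpa using ha))
  linarith [Nat.sub_one_lt_floor a]

theorem div_two_mul_le_natFloor_div {r c : K} (hc : 0 < c) (hcr : c ≤ r) :
    r / (2 * c) ≤ ⌊r / c⌋₊ := by
  have := half_le_natFloor ((one_le_div hc).mpr hcr)
  rwa [div_div, mul_comm] at this

theorem mul_natFloor_div_le {r c : K} (hc : 0 < c) (hr : 0 ≤ r) : c * ⌊r / c⌋₊ ≤ r := by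
  have := Nat.floor_le (div_nonneg hr hc.le)
  rwa [le_div_iff₀ hc, mul_comm] at this

theorem natCast_div_natFloor_le (n : ℕ) {t : K} (ht : 1 ≤ t) :
    ((n / ⌊t⌋₊ : ℕ) : K) ≤ 2 * n / t :=
  calc ((n / ⌊t⌋₊ : ℕ) : K) ≤ n / ⌊t⌋₊ := Nat.cast_div_le
    _ ≤ n / (t / 2) := div_le_div_of_nonneg_left n.cast_nonneg (by linarith)
        (half_le_natFloor ht)
    _ = 2 * n / t := by ring

end Floor

theorem le_div_add_one_mul (n : ℕ) {m : ℕ} (hm : 0 < m) : n ≤ (n / m + 1) * m := by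
  rw [add_one_mul]
  exact (Nat.lt_div_mul_add hm).le

theorem natCast_div_natFloor_rpow_le (n : ℕ) {r s c p : ℝ} (hr : 0 < r) (hc : 0 < c)
    (hp : 0 < p) (hs : 1 ≤ s) (hrs : r / c ≤ s) :
    ((n / ⌊s ^ p⌋₊ : ℕ) : ℝ) ≤ 2 * c ^ p * n / r ^ p :=
  calc ((n / ⌊s ^ p⌋₊ : ℕ) : ℝ) ≤ 2 * n / s ^ p :=
        natCast_div_natFloor_le n (Real.one_le_rpow hs hp.le)
    _ ≤ 2 * n / (r ^ p / c ^ p) := by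
        rw [← Real.div_rpow hr.le hc.le]
        gcongr
    _ = 2 * c ^ p * n / r ^ p := by
        have : 0 < c ^ p := Real.rpow_pos_of_pos hc p
        field_simp

theorem exp_neg_log_inv_mul_le_pow {q x : ℝ} (hq0 : 0 < q) (hq1 : q ≤ 1) {k : ℕ}
    (hk : (k : ℝ) ≤ x) : Real.exp (-Real.log q⁻¹ * x) ≤ q ^ k := by
  have hlog : 0 ≤ Real.log q⁻¹ := Real.log_nonneg (one_le_inv₀ hq0 |>.mpr hq1)
  calc Real.exp (-Real.log q⁻¹ * x) ≤ Real.exp (-Real.log q⁻¹ * k) := by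
        rw [Real.exp_le_exp, neg_mul, neg_mul]
        exact neg_le_neg (mul_le_mul_of_nonneg_left hk hlog)
    _ = q ^ k := by
        rw [Real.log_inv, neg_neg, mul_comm, ← Real.log_pow, Real.exp_log (by positivity)]

theorem mul_exp_neg_log_inv_mul_le_min {q x : ℝ} (hq0 : 0 < q) (hq1 : q ≤ 1) {k : ℕ}
    (hk : (k : ℝ) ≤ x) : q * Real.exp (-Real.log q⁻¹ * x) ≤ min (q ^ k) q := by
  have hexp := exp_neg_log_inv_mul_le_pow hq0 hq1 hk
  have hpow : q ^ k ≤ 1 := pow_le_one₀ hq0.le hq1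
  refine le_min ?_ ?_
  · calc q * Real.exp (-Real.log q⁻¹ * x) ≤ 1 * q ^ k := by gcongr
      _ = q ^ k := one_mul _
  · calc q * Real.exp (-Real.log q⁻¹ * x) ≤ q * 1 := by gcongr; linarith
      _ = q := mul_one q

theorem stmt_17_general {V : Type*} [MeasurableSpace V]
    (G : SimpleGraph V)
    (μ : V → Measure (ℕ → V))
    (dw ε η : ℝ) (hdw : 1 < dw) (hε : 0 < ε) (hε1 : ε < 1) (hη : 1 ≤ η)
    (hyp : ∀ x y, ∀ r : ℕ, (8 : ℝ) ^ (1 / (dw - 1)) ≤ (r : ℝ) →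
      (G.dist x y : ℝ) ≤ 2 * r → ∀ k ℓ : ℕ,
      (4 : ℝ) ^ (dw / (dw - 1)) ≤ (ℓ : ℝ) →
      k * ⌊(r : ℝ) ^ dw⌋₊ ≤ ℓ → ℓ ≤ (k + 1) * ⌊(r : ℝ) ^ dw⌋₊ →
      ENNReal.ofReal (min ((ε / 2) ^ k) (ε / 2))
        ≤ μ y {ω | (∀ j ≤ ℓ, (G.dist x (ω j) : ℝ) ≤ 3 * η * r) ∧
            (G.dist x (ω ℓ) : ℝ) ≤ 2 * r}) :
    ∃ N₀ : ℕ, 1 ≤ N₀ ∧ ∃ C₁ > (0 : ℝ), ∃ C₂ > (0 : ℝ),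
      ∀ x, ∀ r : ℕ, N₀ ≤ r → ∀ n : ℕ, (4 : ℝ) ^ (dw / (dw - 1)) ≤ (n : ℝ) →
        ENNReal.ofReal (C₁ * Real.exp (-C₂ * n / (r : ℝ) ^ dw))
          ≤ μ x {ω | ∀ j ≤ n, (G.dist x (ω j) : ℝ) ≤ (r : ℝ)} := by
  have hc : 0 < 3 * η := by linarith
  set A : ℝ := (8 : ℝ) ^ (1 / (dw - 1))
  have hA : 1 ≤ A := Real.one_le_rpow (by norm_num) (one_div_nonneg.mpr (by linarith))
  set q := ε / 2
  have hq0 : 0 < q := by positivity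
  have hq1 : q < 1 := by simp only [q]; linarith
  have hC₂ : 0 < 2 * (2 * (3 * η)) ^ dw * Real.log q⁻¹ := by
    have : 0 < Real.log q⁻¹ := Real.log_pos ((one_lt_inv₀ hq0).mpr hq1)
    positivity
  refine ⟨⌈2 * (3 * η) * A⌉₊, Nat.one_le_ceil_iff.mpr (by positivity), q, hq0, _, hC₂, ?_⟩
  intro x r hr n hn
  have hrA : 2 * (3 * η) * A ≤ r := Nat.ceil_le.mp hr
  have hr0 : (0 : ℝ) < r := by nlinarith
  set r' := ⌊(r : ℝ) / (3 * η)⌋₊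
  have hr'_ge : (r : ℝ) / (2 * (3 * η)) ≤ r' := div_two_mul_le_natFloor_div hc (by nlinarith)
  have hA_le : A ≤ r' := le_trans (by rw [le_div_iff₀ (by positivity)]; linarith) hr'_ge
  have hm : 0 < ⌊(r' : ℝ) ^ dw⌋₊ :=
    Nat.floor_pos.mpr (Real.one_le_rpow (hA.trans hA_le) (by linarith))
  set k := n / ⌊(r' : ℝ) ^ dw⌋₊
  have hk : (k : ℝ) ≤ 2 * (2 * (3 * η)) ^ dw * n / (r : ℝ) ^ dw :=
    natCast_div_natFloor_rpow_le n hr0 (by positivity) (by linarith) (hA.trans hA_le) hr'_ge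
  have hbound : q * Real.exp (-(2 * (2 * (3 * η)) ^ dw * Real.log q⁻¹) * n / (r : ℝ) ^ dw)
      ≤ min (q ^ k) q := by
    convert mul_exp_neg_log_inv_mul_le_min hq0 hq1.le hk using 3
    ring
  refine (ENNReal.ofReal_le_ofReal hbound).trans <|
    (hyp x x r' hA_le (by simp) k n hn (Nat.div_mul_le_self n _) (le_div_add_one_mul n hm)).trans
      (measure_mono fun ω hω j hj => (hω.1 j hj).trans (mul_natFloor_div_le hc hr0.le))

/-- Suppose a Markov chain on a connected graph satisfies: there are
`ε ∈ (0,1)` and `η ≥ 1` such that for all `x, y` with `d(x,y) ≤ 2r`, all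
`r ≥ 8^{1/(d_w-1)}`, all `k ≥ 0` and `ℓ ≥ 4^{d_w/(d_w-1)}` with
`k⌊r^{d_w}⌋ ≤ ℓ ≤ (k+1)⌊r^{d_w}⌋`,
`P_y(max_{0≤j≤ℓ} d(x,X_j) ≤ 3ηr, d(x,X_ℓ) ≤ 2r) ≥ (ε/2)^k ∧ (ε/2)`.
Then there exist `N₀ ≥ 1` and `C₁, C₂ > 0` with
`P_x(max_{0≤j≤n} d(x,X_j) ≤ r) ≥ C₁ exp(-C₂ n/r^{d_w})` for `r ≥ N₀`,
`n ≥ 4^{d_w/(d_w-1)}`. -/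
theorem stmt_17 {V : Type*} [Countable V] [MeasurableSpace V] [MeasurableSingletonClass V]
    (G : SimpleGraph V) (hG : G.Connected)
    (μ : V → Measure (ℕ → V)) (hprob : ∀ x, IsProbabilityMeasure (μ x))
    (dw ε η : ℝ) (hdw : 1 < dw) (hε : 0 < ε) (hε1 : ε < 1) (hη : 1 ≤ η)
    (hyp : ∀ x y, ∀ r : ℕ, (8 : ℝ) ^ (1 / (dw - 1)) ≤ (r : ℝ) →
      (G.dist x y : ℝ) ≤ 2 * r → ∀ k ℓ : ℕ,
      (4 : ℝ) ^ (dw / (dw - 1)) ≤ (ℓ : ℝ) →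
      k * ⌊(r : ℝ) ^ dw⌋₊ ≤ ℓ → ℓ ≤ (k + 1) * ⌊(r : ℝ) ^ dw⌋₊ →
      ENNReal.ofReal (min ((ε / 2) ^ k) (ε / 2))
        ≤ μ y {ω | (∀ j ≤ ℓ, (G.dist x (ω j) : ℝ) ≤ 3 * η * r) ∧
            (G.dist x (ω ℓ) : ℝ) ≤ 2 * r}) :
    ∃ N₀ : ℕ, 1 ≤ N₀ ∧ ∃ C₁ > (0 : ℝ), ∃ C₂ > (0 : ℝ),
      ∀ x, ∀ r : ℕ, N₀ ≤ r → ∀ n : ℕ, (4 : ℝ) ^ (dw / (dw - 1)) ≤ (n : ℝ) →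
        ENNReal.ofReal (C₁ * Real.exp (-C₂ * n / (r : ℝ) ^ dw))
          ≤ μ x {ω | ∀ j ≤ n, (G.dist x (ω j) : ℝ) ≤ (r : ℝ)} :=
  stmt_17_general G μ dw ε η hdw hε hε1 hη hyp
end
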